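/- Skew-submodularity propagates from the standard basis: A TP-function f on a box B(a) is skew-submodular (i.e., f(x+1_i+1_j)+f(x+1_j) ≥ f(x+1_i)+f(x+2·1_j) for all x and i ≠ j with all four vectors in B(a)) if and only if its restriction to the standard basis Int(a) is skew-submodular, meaning this inequality holds whenever i ≠ j and the four vectors occurring in it belong to Int(a). Furthermore, a skew-submodular TP-function f on B(a) satisfies the additional relations f(x+1_i+1_j)+f(x+1_j+1_k) ≥ f(x+1_i+1_k)+f(x+2·1_j) for all pairwise distinct i, j, k such that all four vectors lie in B(a). -/

import Mathlib

/-- The `q`-th unit vector of `ℤ^n` (modelled with `ℕ` coordinates, since box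
vectors are nonnegative). -/
def unitv (n : ℕ) (q : Fin n) : Fin n → ℕ := fun i => if i = q then 1 else 0

/-- The size `|x| = x_1 + … + x_n` of a vector. -/
def vsize {n : ℕ} (x : Fin n → ℕ) : ℕ := ∑ i, x i

/-- The truncated box `B_m^{m'}(a) = {x : 0 ≤ x ≤ a, m ≤ |x| ≤ m'}`. -/
def tbox {n : ℕ} (a : Fin n → ℕ) (m m' : ℕ) : Set (Fin n → ℕ) :=
  {x | (∀ i, x i ≤ a i) ∧ m ≤ vsize x ∧ vsize x ≤ m'}

/-- The TP3-relations on a subset `B` of `ℤ^n`. -/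
def TP3 {n : ℕ} (B : Set (Fin n → ℕ)) (f : (Fin n → ℕ) → ℝ) : Prop :=
  ∀ (x : Fin n → ℕ) (i j k : Fin n), i < j → j < k →
    x + unitv n i + unitv n k ∈ B → x + unitv n j ∈ B →
    x + unitv n i + unitv n j ∈ B → x + unitv n k ∈ B →
    x + unitv n i ∈ B → x + unitv n j + unitv n k ∈ B →
    f (x + unitv n i + unitv n k) + f (x + unitv n j) =
      max (f (x + unitv n i + unitv n j) + f (x + unitv n k))
          (f (x + unitv n i) + f (x + unitv n j + unitv n k))

/-- The TP4-relations on a subset `B` of `ℤ^n`. -/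
def TP4 {n : ℕ} (B : Set (Fin n → ℕ)) (f : (Fin n → ℕ) → ℝ) : Prop :=
  ∀ (x : Fin n → ℕ) (i j k l : Fin n), i < j → j < k → k < l →
    x + unitv n i + unitv n k ∈ B → x + unitv n j + unitv n l ∈ B →
    x + unitv n i + unitv n j ∈ B → x + unitv n k + unitv n l ∈ B →
    x + unitv n i + unitv n l ∈ B → x + unitv n j + unitv n k ∈ B →
    f (x + unitv n i + unitv n k) + f (x + unitv n j + unitv n l) =
      max (f (x + unitv n i + unitv n j) + f (x + unitv n k + unitv n l))
          (f (x + unitv n i + unitv n l) + f (x + unitv n j + unitv n k))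

/-- A tropical Plücker function on `B`. -/
def IsTP {n : ℕ} (B : Set (Fin n → ℕ)) (f : (Fin n → ℕ) → ℝ) : Prop :=
  TP3 B f ∧ TP4 B f

/-- `x` is a fuzzy-interval (fint) in the box `B(a)`: it is a nonzero vector of the
box and `x_j = a_j` for every index `j` lying strictly between two indices of the
support of `x` (equivalently, strictly between `c(x)` and `d(x)`). -/
def IsFint {n : ℕ} (a x : Fin n → ℕ) : Prop :=
  (∀ i, x i ≤ a i) ∧ x ≠ 0 ∧
  ∀ i j k : Fin n, i < j → j < k → x i ≠ 0 → x k ≠ 0 → x j = a j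

/-- `x` is a sesquialteral fuzzy-interval (sint): not a fint, but the sum of two
fints `x', x''` with `d(x') < c(x'')` and `x'_i = a_i` for all `i < d(x')`. -/
def IsSint {n : ℕ} (a x : Fin n → ℕ) : Prop :=
  ¬ IsFint a x ∧
  ∃ x' x'' : Fin n → ℕ, IsFint a x' ∧ IsFint a x'' ∧ x = x' + x'' ∧
    (∀ i j : Fin n, x' i ≠ 0 → x'' j ≠ 0 → i < j) ∧
    (∀ i : Fin n, (∃ j, i < j ∧ x' j ≠ 0) → x' i = a i)

/-- The standard basis `𝓑 = Sint(a;m) ∪ Int(a;m) ∪ … ∪ Int(a;m')`, with the zero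
vector added when `m = 0`. -/
def stdBasis {n : ℕ} (a : Fin n → ℕ) (m m' : ℕ) : Set (Fin n → ℕ) :=
  {x | (IsSint a x ∧ vsize x = m) ∨ (IsFint a x ∧ m ≤ vsize x ∧ vsize x ≤ m') ∨
       (m = 0 ∧ x = 0)}

/-- `f` is submodular on the set `S`:
`f(x+1_i)+f(x+1_j) ≥ f(x)+f(x+1_i+1_j)` whenever `i ≠ j` and all four vectors
occurring in the inequality belong to `S`. -/
def SubmodOn {n : ℕ} (S : Set (Fin n → ℕ)) (f : (Fin n → ℕ) → ℝ) : Prop :=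
  ∀ (x : Fin n → ℕ) (i j : Fin n), i ≠ j →
    x ∈ S → x + unitv n i ∈ S → x + unitv n j ∈ S → x + unitv n i + unitv n j ∈ S →
    f x + f (x + unitv n i + unitv n j) ≤ f (x + unitv n i) + f (x + unitv n j)

/-- `f` is skew-submodular on the set `S`:
`f(x+1_i+1_j)+f(x+1_j) ≥ f(x+1_i)+f(x+2·1_j)` whenever `i ≠ j` and all four
vectors occurring in the inequality belong to `S`. -/
def SkewSubmodOn {n : ℕ} (S : Set (Fin n → ℕ)) (f : (Fin n → ℕ) → ℝ) : Prop :=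
  ∀ (x : Fin n → ℕ) (i j : Fin n), i ≠ j →
    x + unitv n i ∈ S → x + unitv n j ∈ S →
    x + unitv n i + unitv n j ∈ S → x + unitv n j + unitv n j ∈ S →
    f (x + unitv n i) + f (x + unitv n j + unitv n j) ≤
      f (x + unitv n i + unitv n j) + f (x + unitv n j)

/-- The standard basis `Int(a)` of the entire box: all fuzzy-intervals together
with the zero vector. -/
def intSet {n : ℕ} (a : Fin n → ℕ) : Set (Fin n → ℕ) := {x | IsFint a x ∨ x = 0}

/-!
The skew-submodular inequality at `(x, i, j)` is reduced, by well-founded induction, to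
instances whose four vectors are fuzzy intervals. If a coordinate `m` strictly between `i`
and `j` has room in the box, a TP3 relation trades `i` for `m`, which is closer to `j`. If `x`
has support at some `k` outside the interval spanned by `i` and `j`, write `x = y + 1_k`: the
instances `(y, i, j)` and `(y, k, j)` give the additional relation at `y`, because TP3 forces the
largest of the three pairings `f(y+1_p+1_q) + f(y+1_r)` to be attained twice; one more TP3
relation at `y + 1_j` turns it into the instance at `x`, with the help of the instance
`(y + 1_i, k, j)` when `k` lies beyond `i` as seen from `j`. These moves lower, lexicographically,
`|x|`, then the moment `∑_p (x + 1_i)_p |p - j|`, then `n - |i - j|`. Otherwise all four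
vectors are fuzzy intervals.
-/

section

variable {n : ℕ}

lemma unitv_apply (q p : Fin n) : unitv n q p = if p = q then 1 else 0 := rfl

lemma add_unitv_le_iff {v w : Fin n → ℕ} {q : Fin n} :
    v + unitv n q ≤ w ↔ v ≤ w ∧ v q < w q := by
  refine ⟨fun h => ⟨fun p => (Nat.le_add_right _ _).trans (h p),
    by simpa [unitv_apply] using h q⟩, fun ⟨h, hq⟩ p => ?_⟩
  rcases eq_or_ne p q with rfl | hp
  · simpa [unitv_apply] using hq
  · simpa [unitv_apply, hp] using h p

lemma mem_tbox_zero_vsize_iff {a z : Fin n → ℕ} : z ∈ tbox a 0 (vsize a) ↔ z ≤ a :=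
  ⟨fun h => h.1, fun h => ⟨h, Nat.zero_le _, Finset.sum_le_sum fun p _ => h p⟩⟩

lemma vsize_add_unitv (x : Fin n → ℕ) (q : Fin n) : vsize (x + unitv n q) = vsize x + 1 := by
  simp [vsize, unitv, Finset.sum_add_distrib]

lemma exists_eq_add_unitv {x : Fin n → ℕ} {k : Fin n} (hk : x k ≠ 0) :
    ∃ y, x = y + unitv n k := by
  refine ⟨x - unitv n k, (tsub_add_cancel_of_le fun p => ?_).symm⟩
  rw [unitv_apply]
  split_ifs with hp
  · exact hp ▸ Nat.one_le_iff_ne_zero.2 hk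
  · exact Nat.zero_le _

lemma Set.mem_uIoo_or_mem_uIoo_or_mem_uIoo {α : Type*} [LinearOrder α] {p q r : α}
    (hpq : p ≠ q) (hqr : q ≠ r) (hpr : p ≠ r) :
    q ∈ Set.uIoo p r ∨ p ∈ Set.uIoo q r ∨ r ∈ Set.uIoo p q := by
  simp only [Set.uIoo_eq_union, Set.mem_union, Set.mem_Ioo]
  grind

namespace TP3

variable {a : Fin n → ℕ} {f : (Fin n → ℕ) → ℝ} {x : Fin n → ℕ} {p q r : Fin n}

lemma eq_max_of_mem_uIoo (hf : TP3 (tbox a 0 (vsize a)) f) (hq : q ∈ Set.uIoo p r)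
    (hx : x + unitv n p + unitv n q + unitv n r ≤ a) :
    f (x + unitv n p + unitv n r) + f (x + unitv n q) =
      max (f (x + unitv n p + unitv n q) + f (x + unitv n r))
        (f (x + unitv n q + unitv n r) + f (x + unitv n p)) := by
  have mem : ∀ v, v ≤ x + unitv n p + unitv n q + unitv n r → v ∈ tbox a 0 (vsize a) :=
    fun v hv => mem_tbox_zero_vsize_iff.2 (hv.trans hx)
  rw [Set.uIoo_eq_union] at hq
  rcases hq with ⟨hpq, hqr⟩ | ⟨hrq, hqp⟩
  · have h := hf x p q r hpq hqr ?_ ?_ ?_ ?_ ?_ ?_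
    · rw [h, add_comm (f (x + unitv n p))]
    all_goals exact mem _ fun s => by simp only [Pi.add_apply]; omega
  · have h := hf x r q p hrq hqp ?_ ?_ ?_ ?_ ?_ ?_
    · rw [add_right_comm x (unitv n r), add_right_comm x (unitv n r),
        add_right_comm x (unitv n q) (unitv n p)] at h
      rw [h, max_comm, add_comm (f (x + unitv n r))]
    all_goals exact mem _ fun s => by simp only [Pi.add_apply]; omega

lemma le_of_mem_uIoo (hf : TP3 (tbox a 0 (vsize a)) f) (hq : q ∈ Set.uIoo p r)
    (hx : x + unitv n p + unitv n q + unitv n r ≤ a) :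
    f (x + unitv n q + unitv n r) + f (x + unitv n p) ≤
      f (x + unitv n p + unitv n r) + f (x + unitv n q) :=
  (hf.eq_max_of_mem_uIoo hq hx).symm ▸ le_max_right _ _

lemma le_max (hf : TP3 (tbox a 0 (vsize a)) f) (hpq : p ≠ q) (hqr : q ≠ r) (hpr : p ≠ r)
    (hx : x + unitv n p + unitv n q + unitv n r ≤ a) :
    f (x + unitv n p + unitv n r) + f (x + unitv n q) ≤
      max (f (x + unitv n p + unitv n q) + f (x + unitv n r))
        (f (x + unitv n q + unitv n r) + f (x + unitv n p)) := by
  rcases Set.mem_uIoo_or_mem_uIoo_or_mem_uIoo hpq hqr hpr with hq | hp | hr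
  · exact (hf.eq_max_of_mem_uIoo hq hx).le
  · exact le_max_of_le_right (hf.le_of_mem_uIoo hp (by convert hx using 1; abel))
  · have h := hf.le_of_mem_uIoo (Set.uIoo_comm p q ▸ hr) (x := x) (by convert hx using 1; abel)
    rw [add_right_comm x (unitv n r), add_right_comm x (unitv n q) (unitv n p)] at h
    exact le_max_of_le_left h

end TP3

def SkewIneq (f : (Fin n → ℕ) → ℝ) (x : Fin n → ℕ) (i j : Fin n) : Prop :=
  f (x + unitv n i) + f (x + unitv n j + unitv n j) ≤
    f (x + unitv n i + unitv n j) + f (x + unitv n j)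

def SkewIneq₃ (f : (Fin n → ℕ) → ℝ) (x : Fin n → ℕ) (i j k : Fin n) : Prop :=
  f (x + unitv n i + unitv n k) + f (x + unitv n j + unitv n j) ≤
    f (x + unitv n i + unitv n j) + f (x + unitv n j + unitv n k)

section Steps

variable {a : Fin n → ℕ} {f : (Fin n → ℕ) → ℝ}
  {x y : Fin n → ℕ} {i j k m : Fin n}

lemma SkewIneq.of_mem_uIoo (hf : TP3 (tbox a 0 (vsize a)) f) (hm : m ∈ Set.uIoo i j)
    (hx : x + unitv n i + unitv n m + unitv n j ≤ a) (h : SkewIneq f x m j) :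
    SkewIneq f x i j := by
  have := hf.le_of_mem_uIoo hm hx
  unfold SkewIneq at h ⊢
  linarith

lemma SkewIneq.skewIneq₃ (hf : TP3 (tbox a 0 (vsize a)) f)
    (hij : i ≠ j) (hjk : j ≠ k) (hik : i ≠ k)
    (hx : x + unitv n i + unitv n j + unitv n k ≤ a)
    (hi : SkewIneq f x i j) (hk : SkewIneq f x k j) : SkewIneq₃ f x i j k := by
  have := hf.le_max hij hjk hik hx
  unfold SkewIneq at hi hk
  unfold SkewIneq₃
  rw [add_right_comm x (unitv n k)] at hk
  rcases le_max_iff.1 this with h | h <;> linarith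

lemma SkewIneq₃.skewIneq_add_unitv_of_mem_uIoo (hf : TP3 (tbox a 0 (vsize a)) f)
    (hj : j ∈ Set.uIoo i k)
    (hy : y + unitv n i + unitv n j + unitv n k + unitv n j ≤ a) (h : SkewIneq₃ f y i j k) :
    SkewIneq f (y + unitv n k) i j := by
  have := hf.le_of_mem_uIoo (x := y + unitv n j) hj (by convert hy using 1; abel)
  unfold SkewIneq₃ at h
  unfold SkewIneq
  abel_nf at this h ⊢
  linarith

lemma SkewIneq₃.skewIneq_add_unitv (hf : TP3 (tbox a 0 (vsize a)) f)
    (hij : i ≠ j) (hjk : j ≠ k) (hik : i ≠ k)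
    (hy : y + unitv n i + unitv n j + unitv n k + unitv n j ≤ a) (h : SkewIneq₃ f y i j k)
    (haux : SkewIneq f (y + unitv n i) k j) : SkewIneq f (y + unitv n k) i j := by
  have := hf.le_max (x := y + unitv n j) hij.symm hik hjk (by convert hy using 1; abel)
  unfold SkewIneq₃ at h
  unfold SkewIneq at haux ⊢
  abel_nf at this h haux ⊢
  rcases le_max_iff.1 this with h' | h' <;> linarith

end Steps

lemma isFint_of_support_subset_uIcc {a x w : Fin n → ℕ} {i j : Fin n}
    (hwa : w ≤ a) (hw : w ≠ 0) (hxw : x ≤ w) (hfull : ∀ m ∈ Set.uIoo i j, a m ≤ x m)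
    (hsupp : ∀ p, w p ≠ 0 → p ∈ Set.uIcc i j) :
    IsFint a w :=
  ⟨hwa, hw, fun p q r hpq hqr hp hr => le_antisymm (hwa q)
    ((hfull q ⟨(hsupp p hp).1.trans_lt hpq, hqr.trans_le (hsupp r hr).2⟩).trans (hxw q))⟩

lemma SkewIneq.of_skewSubmodOn_intSet_of_support_subset
    {a : Fin n → ℕ} {f : (Fin n → ℕ) → ℝ} (hb : SkewSubmodOn (intSet a) f)
    {x : Fin n → ℕ} {i j : Fin n} (hij : i ≠ j)
    (hx : x + unitv n i + unitv n j + unitv n j ≤ a) (hfull : ∀ m ∈ Set.uIoo i j, a m ≤ x m)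
    (hsupp : ∀ p, x p ≠ 0 → p ∈ Set.uIcc i j) : SkewIneq f x i j := by
  have mem : ∀ d ≤ unitv n i + unitv n j + unitv n j, d ≠ 0 → x + d ∈ intSet a := by
    intro d hd hd0
    refine Or.inl
      (isFint_of_support_subset_uIcc (fun s => ?_) ?_ le_self_add hfull fun p hp => ?_)
    · have hds := hd s
      have hxs := hx s
      simp only [Pi.add_apply] at hds hxs ⊢
      omega
    · exact fun h => hd0 (funext fun p => (by simpa using congrFun h p : x p = 0 ∧ d p = 0).2)
    · by_cases hpi : p = i
      · exact hpi ▸ Set.left_mem_uIcc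
      by_cases hpj : p = j
      · exact hpj ▸ Set.right_mem_uIcc
      have hdp : d p = 0 := by simpa [unitv_apply, hpi, hpj] using hd p
      exact hsupp p (by simpa [hdp] using hp)
  have hi := mem (unitv n i) (fun s => by simp only [Pi.add_apply]; omega)
    fun h => by simpa [unitv_apply] using congrFun h i
  have hj := mem (unitv n j) (fun s => by simp only [Pi.add_apply]; omega)
    fun h => by simpa [unitv_apply] using congrFun h j
  have hij' := mem (unitv n i + unitv n j) (fun s => by simp only [Pi.add_apply]; omega)
    fun h => by simpa [unitv_apply] using congrFun h j
  have hjj := mem (unitv n j + unitv n j) (fun s => by simp only [Pi.add_apply]; omega)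
    fun h => by simpa [unitv_apply] using congrFun h j
  rw [← add_assoc] at hij' hjj
  exact hb x i j hij hi hj hij' hjj

def momentAbout (j : Fin n) (v : Fin n → ℕ) : ℕ := ∑ p, v p * Nat.dist p j

lemma momentAbout_add_unitv (j q : Fin n) (v : Fin n → ℕ) :
    momentAbout j (v + unitv n q) = momentAbout j v + Nat.dist q j := by
  simp [momentAbout, unitv_apply, add_mul, Finset.sum_add_distrib, ite_mul]

lemma Fin.dist_val_lt (i j : Fin n) : Nat.dist i j < n := by
  have := i.isLt; have := j.isLt
  unfold Nat.dist; omega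

lemma Fin.dist_val_lt_of_mem_uIoo {i j m : Fin n} (hm : m ∈ Set.uIoo i j) :
    Nat.dist m j < Nat.dist i j := by
  simp only [Set.uIoo_eq_union, Set.mem_union, Set.mem_Ioo, Fin.lt_def] at hm
  unfold Nat.dist; omega

lemma Fin.mem_uIoo_of_dist_val_le {i j k : Fin n} (hk : k ∉ Set.uIcc i j)
    (hd : Nat.dist k j ≤ Nat.dist i j) : j ∈ Set.uIoo i k := by
  simp only [Set.uIoo_eq_union, Set.mem_union, Set.mem_Ioo, Set.mem_uIcc, Fin.lt_def,
    Fin.le_def] at hk ⊢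
  unfold Nat.dist at hd; omega

theorem SkewIneq.of_skewSubmodOn_intSet {a : Fin n → ℕ} {f : (Fin n → ℕ) → ℝ}
    (hf : TP3 (tbox a 0 (vsize a)) f) (hb : SkewSubmodOn (intSet a) f)
    (x : Fin n → ℕ) (i j : Fin n) (hij : i ≠ j)
    (hx : x ≤ a) (hxi : x i < a i) (hxj : x j + 2 ≤ a j) : SkewIneq f x i j := by
  by_cases hR : ∃ m ∈ Set.uIoo i j, x m < a m
  · obtain ⟨m, hm, hxm⟩ := hR
    have hmj : m ≠ j := ne_of_mem_of_not_mem hm Set.right_notMem_uIoo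
    have hmi : m ≠ i := ne_of_mem_of_not_mem hm Set.left_notMem_uIoo
    refine SkewIneq.of_mem_uIoo hf hm ?_ (of_skewSubmodOn_intSet hf hb x m j hmj hx hxm hxj)
    simp only [add_unitv_le_iff, hx, true_and, Pi.add_apply, unitv_apply, hmi, hmj.symm,
      hij.symm, ↓reduceIte, add_zero]
    omega
  by_cases hS : ∃ k ∉ Set.uIcc i j, x k ≠ 0
  · obtain ⟨k, hk, hxk⟩ := hS
    have hki : k ≠ i := fun h => hk (h ▸ Set.left_mem_uIcc)
    have hkj : k ≠ j := fun h => hk (h ▸ Set.right_mem_uIcc)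
    obtain ⟨y, rfl⟩ := exists_eq_add_unitv hxk
    simp only [add_unitv_le_iff, Pi.add_apply, unitv_apply, if_neg hki.symm, if_neg hkj.symm,
      add_zero] at hx hxi hxj
    obtain ⟨hy, hyk⟩ := hx
    rename' hxi => hyi, hxj => hyj
    have hy' : y + unitv n i + unitv n j + unitv n k + unitv n j ≤ a := by
      simp only [add_unitv_le_iff, hy, true_and, Pi.add_apply, unitv_apply, hij.symm, hki, hkj,
        hkj.symm, ↓reduceIte, add_zero]
      omega
    have h₃ : SkewIneq₃ f y i j k :=
      SkewIneq.skewIneq₃ hf hij hkj.symm hki.symm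
        (le_self_add.trans hy')
        (of_skewSubmodOn_intSet hf hb y i j hij hy hyi hyj)
        (of_skewSubmodOn_intSet hf hb y k j hkj hy hyk hyj)
    by_cases hd : Nat.dist i j < Nat.dist k j
    · refine h₃.skewIneq_add_unitv hf hij hkj.symm hki.symm hy'
        (of_skewSubmodOn_intSet hf hb (y + unitv n i) k j hkj
          (add_unitv_le_iff.2 ⟨hy, hyi⟩) ?_ ?_)
        <;> simp only [Pi.add_apply, unitv_apply, hki, hij.symm, ↓reduceIte, add_zero] <;> omega
    · exact h₃.skewIneq_add_unitv_of_mem_uIoo hf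
        (Fin.mem_uIoo_of_dist_val_le hk (not_lt.1 hd)) hy'
  push Not at hR hS
  refine SkewIneq.of_skewSubmodOn_intSet_of_support_subset hb hij ?_ hR
    fun p hp => not_imp_comm.1 (hS p) hp
  simp only [add_unitv_le_iff, hx, true_and, Pi.add_apply, unitv_apply, hij.symm, ↓reduceIte,
    add_zero]
  omega
termination_by (vsize x, momentAbout j (x + unitv n i), n - Nat.dist i j)
decreasing_by
  · refine Prod.Lex.right _ (Prod.Lex.left _ _ ?_)
    rw [momentAbout_add_unitv, momentAbout_add_unitv]
    exact Nat.add_lt_add_left (Fin.dist_val_lt_of_mem_uIoo hm) _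
  all_goals subst_vars; simp only [vsize_add_unitv]
  · exact Prod.Lex.left _ _ (Nat.lt_succ_self _)
  · exact Prod.Lex.left _ _ (Nat.lt_succ_self _)
  · rw [add_right_comm y]
    exact Prod.Lex.right _ (Prod.Lex.right _ (Nat.sub_lt_sub_left (Fin.dist_val_lt _ j) hd))

lemma SkewSubmodOn.mono {S T : Set (Fin n → ℕ)} {f : (Fin n → ℕ) → ℝ} (hST : S ⊆ T)
    (h : SkewSubmodOn T f) : SkewSubmodOn S f :=
  fun x i j hij h₁ h₂ h₃ h₄ => h x i j hij (hST h₁) (hST h₂) (hST h₃) (hST h₄)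

lemma intSet_subset_tbox (a : Fin n → ℕ) : intSet a ⊆ tbox a 0 (vsize a) := by
  rintro z (hz | rfl)
  · exact mem_tbox_zero_vsize_iff.2 hz.1
  · exact mem_tbox_zero_vsize_iff.2 zero_le

lemma skewSubmodOn_tbox_iff {a : Fin n → ℕ} {f : (Fin n → ℕ) → ℝ} :
    SkewSubmodOn (tbox a 0 (vsize a)) f ↔
      ∀ x i j, i ≠ j → x ≤ a → x i < a i → x j + 2 ≤ a j → SkewIneq f x i j := by
  constructor
  · intro h x i j hij hx hxi hxj
    apply h x i j hij <;>
      simp only [mem_tbox_zero_vsize_iff, add_unitv_le_iff, hx, true_and, Pi.add_apply,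
        unitv_apply, hij.symm, ↓reduceIte, add_zero] <;> omega
  · intro h x i j hij _ _ hxij hxjj
    simp only [mem_tbox_zero_vsize_iff, add_unitv_le_iff, Pi.add_apply, unitv_apply, hij.symm,
      ↓reduceIte, add_zero] at hxij hxjj
    exact h x i j hij hxij.1.1 hxij.1.2 (by omega)

end

theorem skew_submodular_iff_on_basis_general {n : ℕ} (a : Fin n → ℕ)
    (f : (Fin n → ℕ) → ℝ) (hf : IsTP (tbox a 0 (vsize a)) f) :
    (SkewSubmodOn (tbox a 0 (vsize a)) f ↔ SkewSubmodOn (intSet a) f) ∧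
    (SkewSubmodOn (tbox a 0 (vsize a)) f →
      ∀ (x : Fin n → ℕ) (i j k : Fin n), i ≠ j → j ≠ k → i ≠ k →
        x + unitv n i + unitv n j ∈ tbox a 0 (vsize a) →
        x + unitv n j + unitv n k ∈ tbox a 0 (vsize a) →
        x + unitv n i + unitv n k ∈ tbox a 0 (vsize a) →
        x + unitv n j + unitv n j ∈ tbox a 0 (vsize a) →
        f (x + unitv n i + unitv n k) + f (x + unitv n j + unitv n j) ≤
          f (x + unitv n i + unitv n j) + f (x + unitv n j + unitv n k)) := by
  refine ⟨⟨(·.mono (intSet_subset_tbox a)),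
    fun hb => skewSubmodOn_tbox_iff.2 (SkewIneq.of_skewSubmodOn_intSet hf.1 hb)⟩,
    fun h x i j k hij hjk hik hxij hxjk _ hxjj => ?_⟩
  rw [skewSubmodOn_tbox_iff] at h
  simp only [mem_tbox_zero_vsize_iff, add_unitv_le_iff, Pi.add_apply, unitv_apply, hij.symm,
    hjk.symm, ↓reduceIte, add_zero] at hxij hxjk hxjj
  obtain ⟨⟨hx, hxi⟩, -⟩ := hxij
  refine SkewIneq.skewIneq₃ hf.1 hij hjk hik ?_ (h x i j hij hx hxi (by omega))
    (h x k j hjk.symm hx hxjk.2 (by omega))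
  simp only [add_unitv_le_iff, hx, true_and, Pi.add_apply, unitv_apply, hij.symm, hjk.symm,
    hik.symm, ↓reduceIte, add_zero]
  omega

/-- **Skew-submodularity propagates from the standard basis** (Theorem 4): a
TP-function `f` on a box `B(a)` is skew-submodular iff its restriction to the
standard basis `Int(a)` is skew-submodular; furthermore, a skew-submodular
TP-function satisfies the additional relations
`f(x+1_i+1_j)+f(x+1_j+1_k) ≥ f(x+1_i+1_k)+f(x+2·1_j)` for pairwise distinct
`i, j, k` with all four vectors in `B(a)`. -/
theorem skew_submodular_iff_on_basis {n : ℕ} (a : Fin n → ℕ) (ha : ∀ i, 0 < a i)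
    (f : (Fin n → ℕ) → ℝ) (hf : IsTP (tbox a 0 (vsize a)) f) :
    (SkewSubmodOn (tbox a 0 (vsize a)) f ↔ SkewSubmodOn (intSet a) f) ∧
    (SkewSubmodOn (tbox a 0 (vsize a)) f →
      ∀ (x : Fin n → ℕ) (i j k : Fin n), i ≠ j → j ≠ k → i ≠ k →
        x + unitv n i + unitv n j ∈ tbox a 0 (vsize a) →
        x + unitv n j + unitv n k ∈ tbox a 0 (vsize a) →
        x + unitv n i + unitv n k ∈ tbox a 0 (vsize a) →
        x + unitv n j + unitv n j ∈ tbox a 0 (vsize a) →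
        f (x + unitv n i + unitv n k) + f (x + unitv n j + unitv n j) ≤
          f (x + unitv n i + unitv n j) + f (x + unitv n j + unitv n k)) :=
  skew_submodular_iff_on_basis_general a f hf
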